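/- arXiv:2112.14416 — 3 statements merged into one kernel-verified Lean document; each statement's English description precedes it below -/
import Mathlib

section
/- Let M₀ be a 0-sided supermartingale and M₁ a 1-sided supermartingale on binary strings, meaning M_i is a nonnegative supermartingale with M_i(σ*i) ≥ M_i(σ*(1-i)) for all σ. Suppose M₀(0) + M₁(0) ≥ 1 and M₀(11) + M₁(11) ≥ 1, where 0 and 11 denote the strings [0] and [1,1]. Let B = {[0],[1,1]}, with measures μ([0]) = 1/2 and μ([1,1]) = 1/4, and let E_i = (M_i(0)·(1/2) + M_i(11)·(1/4)) / (3/4) be the conditional average of M_i on B, and Var = ((M₀(0)−E₀)² + (M₁(0)−E₁)²)·(1/2)/(3/4) + ((M₀(11)−E₀)² + (M₁(11)−E₁)²)·(1/4)/(3/4) the total conditional variance. Then 1 − (M₀(ε) + M₁(ε)) ≤ 4·√Var. -/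
/-- `M` is a (nonnegative) supermartingale on binary strings. -/
def IsSuperM (M : List Bool → ℝ) : Prop :=
  (∀ σ, 0 ≤ M σ) ∧ ∀ σ, M (σ ++ [false]) + M (σ ++ [true]) ≤ 2 * M σ

/-- `M` is `b`-sided: at every string it favors the outcome `b`. -/
def SidedAt (b : Bool) (M : List Bool → ℝ) : Prop :=
  ∀ σ, M (σ ++ [!b]) ≤ M (σ ++ [b])

/-- Claim 2.14: if `M₀` is `0`-sided, `M₁` is `1`-sided, and both
`‖M⃗(0)‖₁ ≥ 1`, `‖M⃗(11)‖₁ ≥ 1`, then `1 - ‖M⃗(ε)‖₁ ≤ 4·√Var(M⃗|{0,11})`. -/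
theorem sided_variance_bound (M0 M1 : List Bool → ℝ)
    (h0 : IsSuperM M0) (h1 : IsSuperM M1)
    (hs0 : SidedAt false M0) (hs1 : SidedAt true M1)
    (hA : 1 ≤ M0 [false] + M1 [false])
    (hB : 1 ≤ M0 [true, true] + M1 [true, true]) :
    1 - (M0 [] + M1 []) ≤
      4 * Real.sqrt
        (((M0 [false] - (M0 [false] * (1/2) + M0 [true, true] * (1/4)) / (3/4)) ^ 2 +
          (M1 [false] - (M1 [false] * (1/2) + M1 [true, true] * (1/4)) / (3/4)) ^ 2) * (1/2) / (3/4) +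
         ((M0 [true, true] - (M0 [false] * (1/2) + M0 [true, true] * (1/4)) / (3/4)) ^ 2 +
          (M1 [true, true] - (M1 [false] * (1/2) + M1 [true, true] * (1/4)) / (3/4)) ^ 2) * (1/4) / (3/4)) := by
  set a0 := M0 [false]
  set a1 := M1 [false]
  set b0 := M0 [true, true]
  set b1 := M1 [true, true]
  -- M0 [true] ≥ b0
  have e1 : M0 ([true] ++ [false]) + M0 ([true] ++ [true]) ≤ 2 * M0 [true] := h0.2 [true]
  have e2 : M0 ([true] ++ [true]) ≤ M0 ([true] ++ [false]) := hs0 [true]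
  simp only [List.cons_append, List.nil_append] at e1 e2
  have ht0 : b0 ≤ M0 [true] := by simp only [b0]; linarith
  -- M0 [] ≥ (a0 + M0 [true])/2
  have e3 : M0 ([] ++ [false]) + M0 ([] ++ [true]) ≤ 2 * M0 [] := h0.2 []
  simp only [List.nil_append] at e3
  -- M1 [true] ≥ a1 and M1 [] ≥ (a1 + M1[true])/2
  have e4 : M1 ([] ++ [false]) ≤ M1 ([] ++ [true]) := hs1 []
  have e5 : M1 ([] ++ [false]) + M1 ([] ++ [true]) ≤ 2 * M1 [] := h1.2 []
  simp only [List.nil_append] at e4 e5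
  -- key linear bound
  have key : 1 - (M0 [] + M1 []) ≤ (a0 - b0) / 2 := by linarith
  -- variance lower bound
  have hvar : ((a0 - b0)/3)^2 ≤
      ((a0 - (a0 * (1/2) + b0 * (1/4)) / (3/4)) ^ 2 +
       (a1 - (a1 * (1/2) + b1 * (1/4)) / (3/4)) ^ 2) * (1/2) / (3/4) +
      ((b0 - (a0 * (1/2) + b0 * (1/4)) / (3/4)) ^ 2 +
       (b1 - (a1 * (1/2) + b1 * (1/4)) / (3/4)) ^ 2) * (1/4) / (3/4) := by
    nlinarith [sq_nonneg (a0 - b0), sq_nonneg (a1 - b1)]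
  have hsq : |a0 - b0| / 3 ≤ Real.sqrt
      (((a0 - (a0 * (1/2) + b0 * (1/4)) / (3/4)) ^ 2 +
       (a1 - (a1 * (1/2) + b1 * (1/4)) / (3/4)) ^ 2) * (1/2) / (3/4) +
      ((b0 - (a0 * (1/2) + b0 * (1/4)) / (3/4)) ^ 2 +
       (b1 - (a1 * (1/2) + b1 * (1/4)) / (3/4)) ^ 2) * (1/4) / (3/4)) := by
    have := Real.sqrt_le_sqrt hvar
    rwa [Real.sqrt_sq_eq_abs, abs_div, abs_of_nonneg (by norm_num : (0:ℝ) ≤ 3)] at this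
  have habs : (a0 - b0) / 2 ≤ 4 * (|a0 - b0| / 3) := by
    have := le_abs_self (a0 - b0)
    have := abs_nonneg (a0 - b0)
    linarith
  calc 1 - (M0 [] + M1 []) ≤ (a0 - b0) / 2 := key
    _ ≤ 4 * (|a0 - b0| / 3) := habs
    _ ≤ _ := by linarith [hsq]
end

section
/- Let M be a supermartingale on binary strings and suppose M is (l,i)-betting, meaning that for every σ with |σ| ≡ i (mod l), M(σ) ≥ max(M(σ*0), M(σ*1)). Suppose i < n ≤ l. Then for the set A = {σ ∈ 2^n : σ(i) = 0} we have: if M(σ) ≥ 1 for every σ ∈ A, then M(ε) ≥ 1. -/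
lemma ext_ge (M : List Bool → ℝ) (hM : IsSuperM M) :
    ∀ k σ, (∀ τ : List Bool, τ.length = k → 1 ≤ M (σ ++ τ)) → 1 ≤ M σ := by
  intro k
  induction k with
  | zero => intro σ h; simpa using h [] rfl
  | succ k ih =>
    intro σ h
    have h0 : 1 ≤ M (σ ++ [false]) := ih _ (fun τ hτ => by
      have := h (false :: τ) (by simp [hτ])
      simpa [List.append_assoc] using this)
    have h1 : 1 ≤ M (σ ++ [true]) := ih _ (fun τ hτ => by
      have := h (true :: τ) (by simp [hτ])
      simpa [List.append_assoc] using this)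
    have := hM.2 σ
    linarith

/-- If `M` is an `(l,i)`-betting supermartingale (it does not bet at stages
`≡ i (mod l)`), `i < n ≤ l`, and `M ≥ 1` on all length-`n` strings whose `i`-th
bit is `0`, then `M(ε) ≥ 1`. -/
theorem muchgale_defeat (M : List Bool → ℝ) (hM : IsSuperM M)
    (l i n : ℕ)
    (hbet : ∀ σ : List Bool, σ.length % l = i % l →
      max (M (σ ++ [false])) (M (σ ++ [true])) ≤ M σ)
    (hin : i < n) (hnl : n ≤ l)
    (hA : ∀ f : Fin n → Bool, f ⟨i, hin⟩ = false → 1 ≤ M (List.ofFn f)) :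
    1 ≤ M [] := by
  -- strings of length n with bit i false have M ≥ 1
  have hA' : ∀ ρ : List Bool, (hρ : ρ.length = n) → ρ[i]'(by omega) = false → 1 ≤ M ρ := by
    intro ρ hρ hb
    have h1 := hA (fun j => ρ[(j : ℕ)]'(by omega)) hb
    have h2 : List.ofFn (fun j : Fin n => ρ[(j : ℕ)]'(by omega)) = ρ := by
      apply List.ext_getElem
      · simp [hρ]
      · intro m h₁ h₂; simp
    rwa [h2] at h1
  -- strings of length i have M ≥ 1
  have hI : ∀ σ : List Bool, σ.length = i → 1 ≤ M σ := by
    intro σ hσ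
    have hf : 1 ≤ M (σ ++ [false]) := by
      apply ext_ge M hM (n - (i + 1))
      intro τ hτ
      have hlen : (σ ++ [false] ++ τ).length = n := by simp [hσ, hτ]; omega
      refine hA' _ hlen ?_
      rw [List.getElem_append_left (by simp [hσ]),
        List.getElem_append_right (by simp [hσ])]
      simp [hσ]
    calc 1 ≤ M (σ ++ [false]) := hf
      _ ≤ max (M (σ ++ [false])) (M (σ ++ [true])) := le_max_left _ _
      _ ≤ M σ := hbet σ (by rw [hσ])
  apply ext_ge M hM i
  intro τ hτ
  simpa using hI τ hτ
end

section
/- If for every a > 0 there exist δ(a) > 0 such that for all 0 < δ < δ(a) there exists n with: Alice wins the (1−δ, n)-sided-game with cost μ(A) ≤ 1 − a·δ, then for every c < 1 and ε > 0 there exists n such that Alice wins the (c, n)-sided-game with cost μ(A) ≤ ε. (The derivation: choose a, δ, k with (1−aδ)^k ≤ ε and (1−δ)^k ≥ c, then apply the nesting claim k times.) -/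
open Finset

/-- The moves of a strategy against an adversary play: at round `t` Alice plays
the string given by her strategy applied to the history of adversary responses. -/
def movesOf (strat : List ((List Bool → ℝ) × (List Bool → ℝ)) → List Bool)
    (resp : ℕ → (List Bool → ℝ) × (List Bool → ℝ)) (t : ℕ) : List Bool :=
  strat (List.ofFn (fun j : Fin t => resp j))

/-- The adversary play `resp` is valid against moves `moves` in the `(c,n)`-sided
game: at each round the adversary presents a `0`-sided and a `1`-sided
supermartingale, nondecreasing in time on `2^{≤n}`, catching every string
enumerated so far (some prefix `ρ` has `‖M⃗[t](ρ)‖₁ ≥ 1`). -/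
def ValidResp (n : ℕ) (moves : ℕ → List Bool)
    (resp : ℕ → (List Bool → ℝ) × (List Bool → ℝ)) : Prop :=
  ∀ t : ℕ,
    IsSuperM (resp t).1 ∧ IsSuperM (resp t).2 ∧
    SidedAt false (resp t).1 ∧ SidedAt true (resp t).2 ∧
    (∀ s ≤ t, ∀ σ : List Bool, σ.length ≤ n →
      (resp s).1 σ ≤ (resp t).1 σ ∧ (resp s).2 σ ≤ (resp t).2 σ) ∧
    (∀ s ≤ t, ∃ ρ : List Bool, ρ <+: moves s ∧ 1 ≤ (resp t).1 ρ + (resp t).2 ρ)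

/-- Alice wins the `(c,n)`-sided-game with cost at most `ε`: she has a strategy
enumerating distinct strings of length `n` that forces, against every valid
adversary play, `‖M⃗[t](ε)‖₁ ≥ c` at some round `t`, with the measure of the
strings enumerated by round `t` at most `ε`. -/
def Wins (c : ℝ) (n : ℕ) (ε : ℝ) : Prop :=
  ∃ strat : List ((List Bool → ℝ) × (List Bool → ℝ)) → List Bool,
    (∀ resp t, (movesOf strat resp t).length = n) ∧
    ∀ resp, ValidResp n (movesOf strat resp) resp →
      ∃ t : ℕ, c ≤ (resp t).1 [] + (resp t).2 [] ∧
        (Function.Injective fun s : Fin (t + 1) => movesOf strat resp s) ∧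
        ((t + 1 : ℕ) : ℝ) * ((2 : ℝ)⁻¹) ^ n ≤ ε

/-
The nesting step: Alice plays the outer strategy on the first `n₀` bits and, below the current
outer string `σ`, the inner strategy against the restrictions `M (σ ++ ·)`. The phase over `σ`
ends as soon as the adversary's mass at `σ` reaches `c₁` (or `σ` is already caught); the
response at that moment, divided by `c₁`, is handed to the outer strategy. Running the inner
strategy against the phase, continued by a large constant adversary, shows that every phase
ends within `ε₁ 2^n₁` rounds, and the outer game lasts at most `ε₀ 2^n₀` phases, so Alice wins
the `(c₀ c₁, n₀ + n₁)`-game with cost `ε₀ ε₁`.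

Iterating the nesting `k` times turns a win of the `(1 - δ, n)`-game with cost `1 - a δ` into a
win of the `((1 - δ)^k, k n)`-game with cost `(1 - a δ)^k`. With `a = 2 / ((1 - c) ε)` and
`k = ⌊(1 - c) / δ⌋`, Bernoulli's inequality gives `(1 - δ)^k ≥ c`, and `1 - x ≤ exp (-x)` gives
`(1 - a δ)^k ≤ exp (-1 / ε) ≤ ε` for small `δ`.
-/

lemma ofFn_succ_eq_append {α : Type*} (f : ℕ → α) (t : ℕ) :
    List.ofFn (fun j : Fin (t + 1) => f j) = List.ofFn (fun j : Fin t => f j) ++ [f t] := by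
  rw [List.ofFn_succ']
  simp [List.concat_eq_append]

lemma prefix_or_exists_of_prefix_append {α : Type*} {ρ σ τ : List α} (h : ρ <+: σ ++ τ) :
    ρ <+: σ ∨ ∃ ρ', ρ = σ ++ ρ' ∧ ρ' <+: τ := by
  rcases List.prefix_or_prefix_of_prefix h (List.prefix_append σ τ) with h' | ⟨ρ', rfl⟩
  · exact Or.inl h'
  · exact Or.inr ⟨ρ', rfl, (List.prefix_append_right_inj σ).mp h⟩

lemma Nat.exists_le_lt_succ_of_le_of_lt {f : ℕ → ℕ} {s n : ℕ} (h₀ : f 0 ≤ s)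
    (hs : s < f (n + 1)) : ∃ i ≤ n, f i ≤ s ∧ s < f (i + 1) := by
  induction n with
  | zero => exact ⟨0, le_rfl, h₀, hs⟩
  | succ n ih =>
    by_cases hn : f (n + 1) ≤ s
    · exact ⟨n + 1, le_rfl, hn, hs⟩
    · obtain ⟨i, hi, hfi⟩ := ih (not_le.mp hn)
      exact ⟨i, hi.trans n.le_succ, hfi⟩

lemma mul_inv_two_pow_le_iff {x ε : ℝ} {n : ℕ} : x * (2⁻¹ : ℝ) ^ n ≤ ε ↔ x ≤ ε * 2 ^ n := by
  rw [inv_pow, ← div_eq_mul_inv, div_le_iff₀ (by positivity)]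

lemma IsSuperM.apply_append_singleton_le {M : List Bool → ℝ} (hM : IsSuperM M) (σ : List Bool)
    (b : Bool) : M (σ ++ [b]) ≤ 2 * M σ := by
  have := hM.2 σ
  have := hM.1 (σ ++ [false])
  have := hM.1 (σ ++ [true])
  cases b <;> linarith

lemma IsSuperM.apply_append_le {M : List Bool → ℝ} (hM : IsSuperM M) (σ τ : List Bool) :
    M (σ ++ τ) ≤ 2 ^ τ.length * M σ := by
  induction τ using List.reverseRecOn with
  | nil => simp
  | append_singleton τ b ih =>
    calc M (σ ++ (τ ++ [b])) = M (σ ++ τ ++ [b]) := by rw [List.append_assoc]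
      _ ≤ 2 * M (σ ++ τ) := hM.apply_append_singleton_le _ b
      _ ≤ 2 * (2 ^ τ.length * M σ) := by gcongr
      _ = 2 ^ (τ ++ [b]).length * M σ := by
        rw [List.length_append, List.length_singleton, pow_succ]; ring

lemma IsSuperM.apply_append_le_of_length_le {M : List Bool → ℝ} (hM : IsSuperM M)
    {σ τ : List Bool} {n : ℕ} (hτ : τ.length ≤ n) : M (σ ++ τ) ≤ 2 ^ n * M σ :=
  (hM.apply_append_le σ τ).trans
    (mul_le_mul_of_nonneg_right (pow_le_pow_right₀ one_le_two hτ) (hM.1 σ))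

lemma IsSuperM.comp_append {M : List Bool → ℝ} (hM : IsSuperM M) (σ : List Bool) :
    IsSuperM fun τ => M (σ ++ τ) :=
  ⟨fun _ => hM.1 _, fun τ => by simpa only [List.append_assoc] using hM.2 (σ ++ τ)⟩

lemma IsSuperM.div_const {M : List Bool → ℝ} (hM : IsSuperM M) {c : ℝ} (hc : 0 ≤ c) :
    IsSuperM fun ρ => M ρ / c :=
  ⟨fun ρ => div_nonneg (hM.1 ρ) hc, fun ρ => by
    rw [← add_div, mul_div_assoc']
    exact div_le_div_of_nonneg_right (hM.2 ρ) hc⟩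

lemma isSuperM_const {B : ℝ} (hB : 0 ≤ B) : IsSuperM fun _ => B :=
  ⟨fun _ => hB, fun _ => by linarith⟩

lemma SidedAt.comp_append {b : Bool} {M : List Bool → ℝ} (h : SidedAt b M) (σ : List Bool) :
    SidedAt b fun τ => M (σ ++ τ) :=
  fun τ => by simpa only [List.append_assoc] using h (σ ++ τ)

lemma SidedAt.div_const {b : Bool} {M : List Bool → ℝ} (h : SidedAt b M) {c : ℝ} (hc : 0 ≤ c) :
    SidedAt b fun ρ => M ρ / c :=
  fun σ => div_le_div_of_nonneg_right (h σ) hc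

lemma sidedAt_const (b : Bool) (B : ℝ) : SidedAt b fun _ => B :=
  fun _ => le_rfl

/-- A move of the adversary: the pair `(M₀, M₁)` of a `0`-sided and a `1`-sided
supermartingale. -/
abbrev MartPair : Type := (List Bool → ℝ) × (List Bool → ℝ)

namespace MartPair

/-- The norm `‖M⃗(ρ)‖₁`. -/
def mass (M : MartPair) (ρ : List Bool) : ℝ := M.1 ρ + M.2 ρ

def restrict (σ : List Bool) (M : MartPair) : MartPair :=
  (fun τ => M.1 (σ ++ τ), fun τ => M.2 (σ ++ τ))

noncomputable def div (M : MartPair) (c : ℝ) : MartPair :=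
  (fun ρ => M.1 ρ / c, fun ρ => M.2 ρ / c)

def const (B : ℝ) : MartPair := (fun _ => B, fun _ => B)

def IsSided (M : MartPair) : Prop :=
  IsSuperM M.1 ∧ IsSuperM M.2 ∧ SidedAt false M.1 ∧ SidedAt true M.2

lemma mass_restrict (σ τ : List Bool) (M : MartPair) :
    (M.restrict σ).mass τ = M.mass (σ ++ τ) :=
  rfl

lemma mass_div (M : MartPair) (c : ℝ) (ρ : List Bool) : (M.div c).mass ρ = M.mass ρ / c :=
  (add_div _ _ _).symm

lemma IsSided.mass_nonneg {M : MartPair} (h : M.IsSided) (ρ : List Bool) : 0 ≤ M.mass ρ :=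
  add_nonneg (h.1.1 ρ) (h.2.1.1 ρ)

lemma IsSided.restrict {M : MartPair} (h : M.IsSided) (σ : List Bool) : (M.restrict σ).IsSided :=
  ⟨h.1.comp_append σ, h.2.1.comp_append σ, h.2.2.1.comp_append σ, h.2.2.2.comp_append σ⟩

lemma IsSided.div {M : MartPair} (h : M.IsSided) {c : ℝ} (hc : 0 ≤ c) : (M.div c).IsSided :=
  ⟨h.1.div_const hc, h.2.1.div_const hc, h.2.2.1.div_const hc, h.2.2.2.div_const hc⟩

lemma isSided_const {B : ℝ} (hB : 0 ≤ B) : (const B).IsSided :=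
  ⟨isSuperM_const hB, isSuperM_const hB, sidedAt_const _ _, sidedAt_const _ _⟩

end MartPair

section ValidResp

variable {n : ℕ} {moves : ℕ → List Bool} {resp : ℕ → MartPair}

lemma ValidResp.isSided (h : ValidResp n moves resp) (t : ℕ) : (resp t).IsSided :=
  ⟨(h t).1, (h t).2.1, (h t).2.2.1, (h t).2.2.2.1⟩

lemma ValidResp.le (h : ValidResp n moves resp) {s t : ℕ} (hst : s ≤ t) {σ : List Bool}
    (hσ : σ.length ≤ n) : (resp s).1 σ ≤ (resp t).1 σ ∧ (resp s).2 σ ≤ (resp t).2 σ :=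
  (h t).2.2.2.2.1 s hst σ hσ

lemma ValidResp.mass_le (h : ValidResp n moves resp) {s t : ℕ} (hst : s ≤ t) {σ : List Bool}
    (hσ : σ.length ≤ n) : (resp s).mass σ ≤ (resp t).mass σ :=
  add_le_add (h.le hst hσ).1 (h.le hst hσ).2

lemma ValidResp.exists_prefix (h : ValidResp n moves resp) {s t : ℕ} (hst : s ≤ t) :
    ∃ ρ, ρ <+: moves s ∧ 1 ≤ (resp t).mass ρ :=
  (h t).2.2.2.2.2 s hst

lemma validResp_of (hS : ∀ t, (resp t).IsSided)
    (hle : ∀ s t, s ≤ t → ∀ σ : List Bool, σ.length ≤ n →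
      (resp s).1 σ ≤ (resp t).1 σ ∧ (resp s).2 σ ≤ (resp t).2 σ)
    (hcatch : ∀ s t, s ≤ t → ∃ ρ, ρ <+: moves s ∧ 1 ≤ (resp t).mass ρ) :
    ValidResp n moves resp :=
  fun t => ⟨(hS t).1, (hS t).2.1, (hS t).2.2.1, (hS t).2.2.2, fun s hst => hle s t hst,
    fun s hst => hcatch s t hst⟩

end ValidResp

def IsWinningStrategy (strat : List MartPair → List Bool) (c : ℝ) (n : ℕ) (ε : ℝ) : Prop :=
  (∀ resp t, (movesOf strat resp t).length = n) ∧
    ∀ resp, ValidResp n (movesOf strat resp) resp →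
      ∃ t : ℕ, c ≤ MartPair.mass (resp t) [] ∧
        (Function.Injective fun s : Fin (t + 1) => movesOf strat resp s) ∧
        ((t + 1 : ℕ) : ℝ) * ((2 : ℝ)⁻¹) ^ n ≤ ε

lemma IsWinningStrategy.length_apply {strat : List MartPair → List Bool} {c ε : ℝ} {n : ℕ}
    (h : IsWinningStrategy strat c n ε) (l : List MartPair) : (strat l).length = n := by
  have hl : (List.ofFn fun j : Fin l.length => l.getD j (MartPair.const 0)) = l := by
    simp only [List.getD_eq_getElem _ _ (Fin.isLt _), List.ofFn_getElem]
  simpa only [movesOf, hl] using h.1 (fun k => l.getD k (MartPair.const 0)) l.length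

lemma Wins.mono {c c' ε ε' : ℝ} {n : ℕ} (h : Wins c' n ε') (hc : c ≤ c') (hε : ε' ≤ ε) :
    Wins c n ε := by
  obtain ⟨strat, hlen, hwin⟩ := h
  refine ⟨strat, hlen, fun resp hv => ?_⟩
  obtain ⟨t, hc', hinj, hε'⟩ := hwin resp hv
  exact ⟨t, hc.trans hc', hinj, hε'.trans hε⟩

lemma wins_one_zero_one : Wins 1 0 1 := by
  refine ⟨fun _ => [], fun _ _ => rfl, fun resp hv => ?_⟩
  obtain ⟨ρ, hρ, hmass⟩ := hv.exists_prefix (t := 0) le_rfl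
  rw [List.prefix_nil.mp hρ] at hmass
  exact ⟨0, hmass, fun a b _ => Fin.ext (by omega), by norm_num⟩

section Nesting

variable (s₀ s₁ : List MartPair → List Bool) (c₁ : ℝ) (resp : ℕ → MartPair)

/-- The phase over the outer move `σ` ends when the inner game below `σ` is won, or when `σ`
itself is already caught. -/
def PhaseEnds (σ : List Bool) (M : MartPair) : Prop :=
  c₁ ≤ M.mass σ ∨ ∃ ρ, ρ <+: σ ∧ 1 ≤ M.mass ρ

open Classical in
/-- The state is the pair (outer history, inner history of the current phase). -/
noncomputable def nestStep (S : List MartPair × List MartPair) (M : MartPair) :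
    List MartPair × List MartPair :=
  if PhaseEnds c₁ (s₀ S.1) M then (S.1 ++ [M.div c₁], [])
  else (S.1, S.2 ++ [M.restrict (s₀ S.1)])

noncomputable def nestState (h : List MartPair) : List MartPair × List MartPair :=
  h.foldl (nestStep s₀ c₁) ([], [])

noncomputable def nestStrat (h : List MartPair) : List Bool :=
  s₀ (nestState s₀ c₁ h).1 ++ s₁ (nestState s₀ c₁ h).2

noncomputable def nestStateAt (t : ℕ) : List MartPair × List MartPair :=
  nestState s₀ c₁ (List.ofFn fun j : Fin t => resp j)

noncomputable abbrev outerMove (t : ℕ) : List Bool := s₀ (nestStateAt s₀ c₁ resp t).1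

variable {s₀ s₁ c₁ resp}

lemma nestStateAt_succ (t : ℕ) :
    nestStateAt s₀ c₁ resp (t + 1) = nestStep s₀ c₁ (nestStateAt s₀ c₁ resp t) (resp t) := by
  rw [nestStateAt, nestState, ofFn_succ_eq_append, List.foldl_append]
  rfl

lemma movesOf_nestStrat (t : ℕ) : movesOf (nestStrat s₀ s₁ c₁) resp t =
    outerMove s₀ c₁ resp t ++ s₁ (nestStateAt s₀ c₁ resp t).2 :=
  rfl

section Phase

variable {t₀ : ℕ}

lemma nestStateAt_add_of_forall_not_phaseEnds {u : ℕ} (h₀ : (nestStateAt s₀ c₁ resp t₀).2 = [])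
    (hno : ∀ v < u, ¬ PhaseEnds c₁ (outerMove s₀ c₁ resp t₀) (resp (t₀ + v))) :
    nestStateAt s₀ c₁ resp (t₀ + u) = ((nestStateAt s₀ c₁ resp t₀).1,
      List.ofFn fun j : Fin u => (resp (t₀ + j)).restrict (outerMove s₀ c₁ resp t₀)) := by
  induction u with
  | zero =>
    simp only [Nat.add_zero, List.ofFn_zero]
    exact Prod.ext rfl h₀
  | succ u ih =>
    rw [← add_assoc, nestStateAt_succ, ih fun v hv => hno v (by omega), nestStep,
      if_neg (hno u (by omega)), ofFn_succ_eq_append (fun j => (resp (t₀ + j)).restrict _)]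

lemma outerMove_add_of_forall_not_phaseEnds {u : ℕ} (h₀ : (nestStateAt s₀ c₁ resp t₀).2 = [])
    (hno : ∀ v < u, ¬ PhaseEnds c₁ (outerMove s₀ c₁ resp t₀) (resp (t₀ + v))) :
    outerMove s₀ c₁ resp (t₀ + u) = outerMove s₀ c₁ resp t₀ :=
  congrArg (fun S => s₀ S.1) (nestStateAt_add_of_forall_not_phaseEnds h₀ hno)

lemma nestStateAt_add_succ_of_phaseEnds {u : ℕ} (h₀ : (nestStateAt s₀ c₁ resp t₀).2 = [])
    (hno : ∀ v < u, ¬ PhaseEnds c₁ (outerMove s₀ c₁ resp t₀) (resp (t₀ + v)))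
    (hend : PhaseEnds c₁ (outerMove s₀ c₁ resp t₀) (resp (t₀ + u))) :
    nestStateAt s₀ c₁ resp (t₀ + u + 1) =
      ((nestStateAt s₀ c₁ resp t₀).1 ++ [(resp (t₀ + u)).div c₁], []) := by
  have hend' : PhaseEnds c₁ (outerMove s₀ c₁ resp (t₀ + u)) (resp (t₀ + u)) := by
    rwa [outerMove_add_of_forall_not_phaseEnds h₀ hno]
  rw [nestStateAt_succ, nestStep, if_pos hend', nestStateAt_add_of_forall_not_phaseEnds h₀ hno]

variable (resp) in
noncomputable def padBound (σ : List Bool) (n₁ t₀ N : ℕ) : ℝ :=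
  1 + 2 ^ n₁ * ∑ s ∈ range N, (resp (t₀ + s)).mass σ

variable (resp) in
/-- Rounds `t₀, …, t₀ + N - 1` seen below `σ`, continued by a constant adversary that dominates
them on strings of length `≤ n₁` and catches everything. -/
noncomputable def padResp (σ : List Bool) (n₁ t₀ N u : ℕ) : MartPair :=
  if u < N then (resp (t₀ + u)).restrict σ else MartPair.const (padBound resp σ n₁ t₀ N)

lemma one_le_padBound (hS : ∀ t, (resp t).IsSided) (σ : List Bool) (n₁ N : ℕ) :
    1 ≤ padBound resp σ n₁ t₀ N := by
  have := sum_nonneg fun s (_ : s ∈ range N) => (hS (t₀ + s)).mass_nonneg σ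
  unfold padBound
  nlinarith [pow_pos (two_pos (α := ℝ)) n₁]

lemma apply_append_le_padBound (hS : ∀ t, (resp t).IsSided) {σ τ : List Bool} {n₁ N s : ℕ}
    (hs : s < N) (hτ : τ.length ≤ n₁) :
    (resp (t₀ + s)).1 (σ ++ τ) ≤ padBound resp σ n₁ t₀ N ∧
      (resp (t₀ + s)).2 (σ ++ τ) ≤ padBound resp σ n₁ t₀ N := by
  have hsum : (resp (t₀ + s)).mass σ ≤ ∑ s ∈ range N, (resp (t₀ + s)).mass σ :=
    single_le_sum (fun i _ => (hS (t₀ + i)).mass_nonneg σ) (mem_range.mpr hs)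
  have h₁ := (hS (t₀ + s)).1.apply_append_le_of_length_le (σ := σ) hτ
  have h₂ := (hS (t₀ + s)).2.1.apply_append_le_of_length_le (σ := σ) hτ
  have p₁ := (hS (t₀ + s)).1.1 σ
  have p₂ := (hS (t₀ + s)).2.1.1 σ
  have hpow : (0 : ℝ) ≤ 2 ^ n₁ := by positivity
  unfold padBound MartPair.mass at *
  constructor <;> nlinarith

variable {n₀ n₁ N : ℕ}

lemma movesOf_padResp (h₀ : (nestStateAt s₀ c₁ resp t₀).2 = [])
    (hno : ∀ v < N, ¬ PhaseEnds c₁ (outerMove s₀ c₁ resp t₀) (resp (t₀ + v))) {s : ℕ}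
    (hs : s ≤ N) : movesOf s₁ (padResp resp (outerMove s₀ c₁ resp t₀) n₁ t₀ N) s =
      s₁ (nestStateAt s₀ c₁ resp (t₀ + s)).2 := by
  rw [movesOf, nestStateAt_add_of_forall_not_phaseEnds h₀ fun v hv => hno v (by omega)]
  congr 2
  funext j
  exact if_pos (by omega)

lemma exists_prefix_innerMove (hv : ValidResp (n₀ + n₁) (movesOf (nestStrat s₀ s₁ c₁) resp) resp)
    (h₀ : (nestStateAt s₀ c₁ resp t₀).2 = [])
    (hno : ∀ v < N, ¬ PhaseEnds c₁ (outerMove s₀ c₁ resp t₀) (resp (t₀ + v)))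
    {s t : ℕ} (hst : s ≤ t) (ht : t < N) :
    ∃ ρ, ρ <+: s₁ (nestStateAt s₀ c₁ resp (t₀ + s)).2 ∧
      1 ≤ (resp (t₀ + t)).mass (outerMove s₀ c₁ resp t₀ ++ ρ) := by
  obtain ⟨ρ, hρ, hmass⟩ := hv.exists_prefix (Nat.add_le_add_left hst t₀)
  rw [movesOf_nestStrat, outerMove_add_of_forall_not_phaseEnds h₀ fun v hv => hno v (by omega)]
    at hρ
  rcases prefix_or_exists_of_prefix_append hρ with hσ | ⟨ρ', rfl, hρ'⟩
  · exact absurd (Or.inr ⟨ρ, hσ, hmass⟩) (hno t ht)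
  · exact ⟨ρ', hρ', hmass⟩

lemma validResp_padResp (hv : ValidResp (n₀ + n₁) (movesOf (nestStrat s₀ s₁ c₁) resp) resp)
    (hn₀ : ∀ l, (s₀ l).length = n₀) (h₀ : (nestStateAt s₀ c₁ resp t₀).2 = [])
    (hno : ∀ v < N, ¬ PhaseEnds c₁ (outerMove s₀ c₁ resp t₀) (resp (t₀ + v))) :
    ValidResp n₁ (movesOf s₁ (padResp resp (outerMove s₀ c₁ resp t₀) n₁ t₀ N))
      (padResp resp (outerMove s₀ c₁ resp t₀) n₁ t₀ N) := by
  have hB := one_le_padBound (t₀ := t₀) hv.isSided (outerMove s₀ c₁ resp t₀) n₁ N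
  refine validResp_of (fun t => ?_) (fun s t hst τ hτ => ?_) (fun s t hst => ?_)
  · unfold padResp
    split_ifs
    exacts [(hv.isSided _).restrict _, MartPair.isSided_const (zero_le_one.trans hB)]
  · by_cases ht : t < N
    · simp only [padResp, ht, lt_of_le_of_lt hst ht, if_true, MartPair.restrict]
      refine hv.le (Nat.add_le_add_left hst t₀) ?_
      rw [List.length_append, outerMove, hn₀]
      omega
    · by_cases hs : s < N
      · simpa only [padResp, hs, ht, if_true, if_false, MartPair.restrict, MartPair.const]
          using apply_append_le_padBound hv.isSided hs hτ
      · simp only [padResp, hs, ht, if_false, le_refl, and_self]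
  · by_cases ht : t < N
    · rw [movesOf_padResp h₀ hno (by omega)]
      simp only [padResp, ht, if_true]
      exact exists_prefix_innerMove hv h₀ hno hst ht
    · refine ⟨[], List.nil_prefix, ?_⟩
      simp only [padResp, ht, if_false, MartPair.const, MartPair.mass]
      linarith

lemma exists_inner_win (hv : ValidResp (n₀ + n₁) (movesOf (nestStrat s₀ s₁ c₁) resp) resp)
    (hn₀ : ∀ l, (s₀ l).length = n₀) {ε₁ : ℝ} (hs₁ : IsWinningStrategy s₁ c₁ n₁ ε₁)
    (h₀ : (nestStateAt s₀ c₁ resp t₀).2 = [])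
    (hno : ∀ v < N, ¬ PhaseEnds c₁ (outerMove s₀ c₁ resp t₀) (resp (t₀ + v))) :
    ∃ u, N ≤ u ∧
      (Function.Injective fun s : Fin (u + 1) =>
        movesOf s₁ (padResp resp (outerMove s₀ c₁ resp t₀) n₁ t₀ N) s) ∧
      ((u + 1 : ℕ) : ℝ) ≤ ε₁ * 2 ^ n₁ := by
  obtain ⟨u, hwin, hinj, hcost⟩ := hs₁.2 _ (validResp_padResp hv hn₀ h₀ hno)
  refine ⟨u, ?_, hinj, mul_inv_two_pow_le_iff.mp hcost⟩
  by_contra! hu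
  refine hno u hu (Or.inl ?_)
  simpa only [padResp, hu, if_true, MartPair.mass_restrict, List.append_nil] using hwin

variable (s₀ c₁ resp) in
noncomputable def phaseLen (t₀ : ℕ) : ℕ :=
  sInf {u | PhaseEnds c₁ (outerMove s₀ c₁ resp t₀) (resp (t₀ + u))}

lemma not_phaseEnds_of_lt_phaseLen {v : ℕ} (hv : v < phaseLen s₀ c₁ resp t₀) :
    ¬ PhaseEnds c₁ (outerMove s₀ c₁ resp t₀) (resp (t₀ + v)) :=
  Nat.notMem_of_lt_sInf hv

lemma phaseEnds_phaseLen (hv : ValidResp (n₀ + n₁) (movesOf (nestStrat s₀ s₁ c₁) resp) resp)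
    (hn₀ : ∀ l, (s₀ l).length = n₀) {ε₁ : ℝ} (hs₁ : IsWinningStrategy s₁ c₁ n₁ ε₁)
    (h₀ : (nestStateAt s₀ c₁ resp t₀).2 = []) :
    PhaseEnds c₁ (outerMove s₀ c₁ resp t₀) (resp (t₀ + phaseLen s₀ c₁ resp t₀)) := by
  refine Nat.sInf_mem (s := {u | PhaseEnds c₁ (outerMove s₀ c₁ resp t₀) (resp (t₀ + u))}) ?_
  by_contra! hno
  obtain ⟨u, hNu, -, hcost⟩ := exists_inner_win (N := ⌈ε₁ * 2 ^ n₁⌉₊) hv hn₀ hs₁ h₀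
    fun v _ hv => hno.subset hv
  have hceil := Nat.le_ceil (ε₁ * 2 ^ n₁)
  have hu : (⌈ε₁ * 2 ^ n₁⌉₊ : ℝ) ≤ u := by exact_mod_cast hNu
  push_cast at hcost
  linarith

lemma phaseLen_add_one_le (hv : ValidResp (n₀ + n₁) (movesOf (nestStrat s₀ s₁ c₁) resp) resp)
    (hn₀ : ∀ l, (s₀ l).length = n₀) {ε₁ : ℝ} (hs₁ : IsWinningStrategy s₁ c₁ n₁ ε₁)
    (h₀ : (nestStateAt s₀ c₁ resp t₀).2 = []) :
    ((phaseLen s₀ c₁ resp t₀ + 1 : ℕ) : ℝ) ≤ ε₁ * 2 ^ n₁ := by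
  obtain ⟨u, hLu, -, hcost⟩ :=
    exists_inner_win hv hn₀ hs₁ h₀ fun v => not_phaseEnds_of_lt_phaseLen
  exact le_trans (by exact_mod_cast Nat.succ_le_succ hLu) hcost

lemma injective_innerMove (hv : ValidResp (n₀ + n₁) (movesOf (nestStrat s₀ s₁ c₁) resp) resp)
    (hn₀ : ∀ l, (s₀ l).length = n₀) {ε₁ : ℝ} (hs₁ : IsWinningStrategy s₁ c₁ n₁ ε₁)
    (h₀ : (nestStateAt s₀ c₁ resp t₀).2 = []) :
    Function.Injective fun u : Fin (phaseLen s₀ c₁ resp t₀ + 1) =>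
      s₁ (nestStateAt s₀ c₁ resp (t₀ + u)).2 := by
  have hno : ∀ v < phaseLen s₀ c₁ resp t₀,
      ¬ PhaseEnds c₁ (outerMove s₀ c₁ resp t₀) (resp (t₀ + v)) :=
    fun v => not_phaseEnds_of_lt_phaseLen
  obtain ⟨u, hLu, hinj, -⟩ := exists_inner_win hv hn₀ hs₁ h₀ hno
  intro a b hab
  have hmoves : ∀ x : Fin (phaseLen s₀ c₁ resp t₀ + 1),
      movesOf s₁ (padResp resp (outerMove s₀ c₁ resp t₀) n₁ t₀ (phaseLen s₀ c₁ resp t₀))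
        (Fin.castLE (by omega) x : Fin (u + 1)) = s₁ (nestStateAt s₀ c₁ resp (t₀ + x)).2 :=
    fun x => movesOf_padResp h₀ hno (Nat.lt_succ_iff.mp x.isLt)
  refine Fin.castLE_injective (n := u + 1) (by omega) (hinj ?_)
  simp only [hmoves]
  exact hab

end Phase

variable (s₀ c₁ resp)

noncomputable def phaseStart : ℕ → ℕ
  | 0 => 0
  | i + 1 => phaseStart i + phaseLen s₀ c₁ resp (phaseStart i) + 1

noncomputable def phaseEnd (i : ℕ) : ℕ :=
  phaseStart s₀ c₁ resp i + phaseLen s₀ c₁ resp (phaseStart s₀ c₁ resp i)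

noncomputable def outerResp (i : ℕ) : MartPair := (resp (phaseEnd s₀ c₁ resp i)).div c₁

variable {s₀ c₁ resp}

lemma phaseStart_succ (i : ℕ) : phaseStart s₀ c₁ resp (i + 1) = phaseEnd s₀ c₁ resp i + 1 :=
  rfl

lemma strictMono_phaseEnd : StrictMono (phaseEnd s₀ c₁ resp) := by
  have hstart : StrictMono (phaseStart s₀ c₁ resp) :=
    strictMono_nat_of_lt_succ fun i => by rw [phaseStart_succ, phaseEnd]; omega
  intro i j hij
  have := hstart.monotone (Nat.succ_le_of_lt hij)
  rw [phaseStart_succ] at this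
  unfold phaseEnd at *
  omega

variable {n₀ n₁ : ℕ} {ε₁ : ℝ}

lemma nestStateAt_phaseStart
    (hv : ValidResp (n₀ + n₁) (movesOf (nestStrat s₀ s₁ c₁) resp) resp)
    (hn₀ : ∀ l, (s₀ l).length = n₀) (hs₁ : IsWinningStrategy s₁ c₁ n₁ ε₁) (i : ℕ) :
    nestStateAt s₀ c₁ resp (phaseStart s₀ c₁ resp i) =
      (List.ofFn fun j : Fin i => outerResp s₀ c₁ resp j, []) := by
  induction i with
  | zero => rfl
  | succ i ih =>
    have h₀ : (nestStateAt s₀ c₁ resp (phaseStart s₀ c₁ resp i)).2 = [] := by rw [ih]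
    rw [phaseStart_succ, phaseEnd, nestStateAt_add_succ_of_phaseEnds h₀
      (fun v => not_phaseEnds_of_lt_phaseLen) (phaseEnds_phaseLen hv hn₀ hs₁ h₀), ih,
      ofFn_succ_eq_append (outerResp s₀ c₁ resp)]
    rfl

lemma nestStateAt_phaseStart_snd
    (hv : ValidResp (n₀ + n₁) (movesOf (nestStrat s₀ s₁ c₁) resp) resp)
    (hn₀ : ∀ l, (s₀ l).length = n₀) (hs₁ : IsWinningStrategy s₁ c₁ n₁ ε₁) (i : ℕ) :
    (nestStateAt s₀ c₁ resp (phaseStart s₀ c₁ resp i)).2 = [] := by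
  rw [nestStateAt_phaseStart hv hn₀ hs₁]

lemma movesOf_outerResp (hv : ValidResp (n₀ + n₁) (movesOf (nestStrat s₀ s₁ c₁) resp) resp)
    (hn₀ : ∀ l, (s₀ l).length = n₀) (hs₁ : IsWinningStrategy s₁ c₁ n₁ ε₁) (i : ℕ) :
    movesOf s₀ (outerResp s₀ c₁ resp) i = outerMove s₀ c₁ resp (phaseStart s₀ c₁ resp i) := by
  rw [movesOf, outerMove, nestStateAt_phaseStart hv hn₀ hs₁]

lemma PhaseEnds.exists_prefix {σ : List Bool} {M : MartPair} (h : PhaseEnds c₁ σ M)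
    (hc₁ : c₁ ≤ 1) : ∃ ρ, ρ <+: σ ∧ c₁ ≤ M.mass ρ := by
  rcases h with h | ⟨ρ, hρ, h⟩
  exacts [⟨σ, List.prefix_refl σ, h⟩, ⟨ρ, hρ, hc₁.trans h⟩]

lemma validResp_outerResp (hv : ValidResp (n₀ + n₁) (movesOf (nestStrat s₀ s₁ c₁) resp) resp)
    (hn₀ : ∀ l, (s₀ l).length = n₀) (hs₁ : IsWinningStrategy s₁ c₁ n₁ ε₁) (hc₁ : 0 < c₁)
    (hc₁' : c₁ ≤ 1) : ValidResp n₀ (movesOf s₀ (outerResp s₀ c₁ resp)) (outerResp s₀ c₁ resp) := by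
  have hmono := (strictMono_phaseEnd (s₀ := s₀) (c₁ := c₁) (resp := resp)).monotone
  refine validResp_of (fun j => (hv.isSided _).div hc₁.le) (fun i j hij ρ hρ => ?_)
    (fun i j hij => ?_)
  · have hle := hv.le (hmono hij) (σ := ρ) (by omega)
    exact ⟨div_le_div_of_nonneg_right hle.1 hc₁.le, div_le_div_of_nonneg_right hle.2 hc₁.le⟩
  · obtain ⟨ρ, hρ, hmass⟩ := (phaseEnds_phaseLen hv hn₀ hs₁
      (nestStateAt_phaseStart_snd hv hn₀ hs₁ i)).exists_prefix hc₁'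
    refine ⟨ρ, by rwa [movesOf_outerResp hv hn₀ hs₁], ?_⟩
    have hlen : ρ.length ≤ n₀ + n₁ := by
      have := hρ.length_le
      rw [outerMove, hn₀] at this
      omega
    rw [outerResp, MartPair.mass_div, one_le_div hc₁]
    exact hmass.trans (hv.mass_le (hmono hij) hlen)

lemma movesOf_nestStrat_phaseStart_add
    (hv : ValidResp (n₀ + n₁) (movesOf (nestStrat s₀ s₁ c₁) resp) resp)
    (hn₀ : ∀ l, (s₀ l).length = n₀) (hs₁ : IsWinningStrategy s₁ c₁ n₁ ε₁) {i u : ℕ}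
    (hu : u ≤ phaseLen s₀ c₁ resp (phaseStart s₀ c₁ resp i)) :
    movesOf (nestStrat s₀ s₁ c₁) resp (phaseStart s₀ c₁ resp i + u) =
      movesOf s₀ (outerResp s₀ c₁ resp) i ++
        s₁ (nestStateAt s₀ c₁ resp (phaseStart s₀ c₁ resp i + u)).2 := by
  rw [movesOf_nestStrat, movesOf_outerResp hv hn₀ hs₁,
    outerMove_add_of_forall_not_phaseEnds (nestStateAt_phaseStart_snd hv hn₀ hs₁ i) fun v hv =>
      not_phaseEnds_of_lt_phaseLen (lt_of_lt_of_le hv hu)]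

lemma injective_movesOf_nestStrat
    (hv : ValidResp (n₀ + n₁) (movesOf (nestStrat s₀ s₁ c₁) resp) resp)
    (hn₀ : ∀ l, (s₀ l).length = n₀) (hs₁ : IsWinningStrategy s₁ c₁ n₁ ε₁) {k : ℕ}
    (hinj : Function.Injective fun i : Fin (k + 1) => movesOf s₀ (outerResp s₀ c₁ resp) i) :
    Function.Injective fun s : Fin (phaseEnd s₀ c₁ resp k + 1) =>
      movesOf (nestStrat s₀ s₁ c₁) resp s := by
  have hdecomp : ∀ s : Fin (phaseEnd s₀ c₁ resp k + 1), ∃ i ≤ k,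
      ∃ u ≤ phaseLen s₀ c₁ resp (phaseStart s₀ c₁ resp i),
        (s : ℕ) = phaseStart s₀ c₁ resp i + u := by
    intro s
    obtain ⟨i, hik, his, hsi⟩ := Nat.exists_le_lt_succ_of_le_of_lt (f := phaseStart s₀ c₁ resp)
      (Nat.zero_le s) (n := k) (by rw [phaseStart_succ]; exact s.isLt)
    simp only [phaseStart_succ, phaseEnd] at hsi
    exact ⟨i, hik, s - phaseStart s₀ c₁ resp i, by omega, by omega⟩
  intro a b hab
  obtain ⟨i, hik, u, hu, ha⟩ := hdecomp a
  obtain ⟨j, hjk, v, hv', hb⟩ := hdecomp b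
  simp only [ha, hb, movesOf_nestStrat_phaseStart_add hv hn₀ hs₁ hu,
    movesOf_nestStrat_phaseStart_add hv hn₀ hs₁ hv'] at hab
  obtain ⟨hout, hin⟩ := List.append_inj hab (by rw [movesOf, movesOf, hn₀, hn₀])
  obtain rfl : i = j := by
    simpa using @hinj ⟨i, Nat.lt_succ_of_le hik⟩ ⟨j, Nat.lt_succ_of_le hjk⟩ hout
  obtain rfl : u = v := by
    simpa using injective_innerMove hv hn₀ hs₁ (nestStateAt_phaseStart_snd hv hn₀ hs₁ i)
      (a₁ := ⟨u, Nat.lt_succ_of_le hu⟩) (a₂ := ⟨v, Nat.lt_succ_of_le hv'⟩) hin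
  exact Fin.ext (ha.trans hb.symm)

lemma phaseEnd_add_one_le (hv : ValidResp (n₀ + n₁) (movesOf (nestStrat s₀ s₁ c₁) resp) resp)
    (hn₀ : ∀ l, (s₀ l).length = n₀) (hs₁ : IsWinningStrategy s₁ c₁ n₁ ε₁) (k : ℕ) :
    ((phaseEnd s₀ c₁ resp k + 1 : ℕ) : ℝ) ≤ (k + 1) * (ε₁ * 2 ^ n₁) := by
  induction k with
  | zero => simpa [phaseEnd, phaseStart] using phaseLen_add_one_le hv hn₀ hs₁ (t₀ := 0) rfl
  | succ k ih =>
    have hlen := phaseLen_add_one_le hv hn₀ hs₁ (nestStateAt_phaseStart_snd hv hn₀ hs₁ (k + 1))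
    have hend : phaseEnd s₀ c₁ resp (k + 1) + 1 = (phaseEnd s₀ c₁ resp k + 1) +
        (phaseLen s₀ c₁ resp (phaseStart s₀ c₁ resp (k + 1)) + 1) := by
      simp only [phaseEnd, phaseStart_succ]
      omega
    rw [hend]
    push_cast at ih hlen ⊢
    linarith

theorem isWinningStrategy_nestStrat {c₀ ε₀ : ℝ} (hs₀ : IsWinningStrategy s₀ c₀ n₀ ε₀)
    (hs₁ : IsWinningStrategy s₁ c₁ n₁ ε₁) (hc₁ : 0 < c₁) (hc₁' : c₁ ≤ 1) :
    IsWinningStrategy (nestStrat s₀ s₁ c₁) (c₀ * c₁) (n₀ + n₁) (ε₀ * ε₁) := by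
  have hn₀ := hs₀.length_apply
  refine ⟨fun resp t => ?_, fun resp hv => ?_⟩
  · rw [movesOf_nestStrat, List.length_append, hn₀, hs₁.length_apply]
  obtain ⟨k, hwin, hinj, hcost⟩ := hs₀.2 _ (validResp_outerResp hv hn₀ hs₁ hc₁ hc₁')
  refine ⟨phaseEnd s₀ c₁ resp k, ?_, injective_movesOf_nestStrat hv hn₀ hs₁ hinj, ?_⟩
  · rwa [outerResp, MartPair.mass_div, le_div_iff₀ hc₁] at hwin
  · have hC : 0 ≤ ε₁ * 2 ^ n₁ :=
      le_trans (by positivity) (phaseLen_add_one_le hv hn₀ hs₁ (t₀ := 0) rfl)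
    rw [mul_inv_two_pow_le_iff] at hcost ⊢
    calc ((phaseEnd s₀ c₁ resp k + 1 : ℕ) : ℝ) ≤ (k + 1) * (ε₁ * 2 ^ n₁) :=
          phaseEnd_add_one_le hv hn₀ hs₁ k
      _ ≤ ε₀ * 2 ^ n₀ * (ε₁ * 2 ^ n₁) := by gcongr; exact_mod_cast hcost
      _ = ε₀ * ε₁ * 2 ^ (n₀ + n₁) := by ring

end Nesting

theorem Wins.mul {c₀ c₁ ε₀ ε₁ : ℝ} {n₀ n₁ : ℕ} (W₀ : Wins c₀ n₀ ε₀) (W₁ : Wins c₁ n₁ ε₁)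
    (hc₁ : 0 < c₁) (hc₁' : c₁ ≤ 1) : Wins (c₀ * c₁) (n₀ + n₁) (ε₀ * ε₁) := by
  obtain ⟨s₀, hs₀⟩ : ∃ s, IsWinningStrategy s c₀ n₀ ε₀ := W₀
  obtain ⟨s₁, hs₁⟩ : ∃ s, IsWinningStrategy s c₁ n₁ ε₁ := W₁
  exact ⟨_, isWinningStrategy_nestStrat hs₀ hs₁ hc₁ hc₁'⟩

theorem Wins.pow {c ε : ℝ} {n : ℕ} (W : Wins c n ε) (hc : 0 < c) (hc' : c ≤ 1) :
    ∀ k : ℕ, Wins (c ^ k) (k * n) (ε ^ k)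
  | 0 => by simpa using wins_one_zero_one
  | k + 1 => by
    rw [pow_succ, pow_succ, Nat.succ_mul]
    exact (W.pow hc hc' k).mul W hc hc'

open Filter Topology in
theorem exists_pow_bounds {c ε : ℝ} (hc : c < 1) (hε : 0 < ε) :
    ∃ a > 0, ∀ᶠ δ in 𝓝[>] 0, ∃ k : ℕ, c ≤ (1 - δ) ^ k ∧ (1 - a * δ) ^ k ≤ ε := by
  set γ := 1 - c
  have hγ : 0 < γ := sub_pos.mpr hc
  set a := 2 / (γ * ε)
  have ha : 0 < a := by positivity
  refine ⟨a, ha, ?_⟩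
  filter_upwards [Ioo_mem_nhdsGT (half_pos hγ), Ioo_mem_nhdsGT (inv_pos.mpr ha),
    Ioo_mem_nhdsGT one_pos] with δ ⟨hδ, hδγ⟩ ⟨_, hδa⟩ ⟨_, hδ1⟩
  set k := ⌊γ / δ⌋₊
  have hkδ : k * δ ≤ γ := (le_div_iff₀ hδ).mp (Nat.floor_le (by positivity))
  have hkδ' : γ / 2 ≤ k * δ := by
    have := (div_lt_iff₀ hδ).mp (Nat.lt_floor_add_one (γ / δ))
    linarith
  refine ⟨k, ?_, ?_⟩
  · calc c = 1 + k * (-δ) - (γ - k * δ) := by ring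
      _ ≤ 1 + k * (-δ) := by linarith
      _ ≤ (1 + -δ) ^ k := one_add_mul_le_pow (by linarith) k
      _ = (1 - δ) ^ k := by rw [← sub_eq_add_neg]
  · have haδ : a * δ ≤ 1 := by rw [← le_div_iff₀' ha, one_div]; exact hδa.le
    calc (1 - a * δ) ^ k ≤ Real.exp (-(a * δ)) ^ k :=
          pow_le_pow_left₀ (by linarith) (Real.one_sub_le_exp_neg _) k
      _ = Real.exp (-(a * (k * δ))) := by rw [← Real.exp_nat_mul]; ring_nf
      _ ≤ Real.exp (-(a * (γ / 2))) := by gcongr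
      _ = (Real.exp ε⁻¹)⁻¹ := by rw [← Real.exp_neg]; congr 1; simp only [a]; field_simp
      _ ≤ ε := by
          rw [inv_le_comm₀ (Real.exp_pos _) hε]
          linarith [Real.add_one_le_exp ε⁻¹]

/-- Claim 2.5: if for every `a > 0` there is `δ(a) > 0` such that for all
`0 < δ < δ(a)` Alice wins the `(1−δ,n)`-sided-game with cost `≤ 1 − a·δ`
for some `n`, then for every `c < 1` and `ε > 0` she wins the
`(c,n)`-sided-game with cost `≤ ε` for some `n`. -/
theorem amplification
    (H : ∀ a : ℝ, 0 < a → ∃ δ0 : ℝ, 0 < δ0 ∧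
      ∀ δ : ℝ, 0 < δ → δ < δ0 → ∃ n, Wins (1 - δ) n (1 - a * δ)) :
    ∀ c : ℝ, c < 1 → ∀ ε : ℝ, 0 < ε → ∃ n, Wins c n ε := by
  intro c hc ε hε
  obtain ⟨a, ha, hpow⟩ := exists_pow_bounds hc hε
  obtain ⟨δ₀, hδ₀, hwin⟩ := H a ha
  obtain ⟨δ, ⟨k, hck, hεk⟩, hδ, hδ'⟩ :=
    (hpow.and (Ioo_mem_nhdsGT (lt_min hδ₀ one_pos))).exists
  obtain ⟨n, hn⟩ := hwin δ hδ (hδ'.trans_le (min_le_left _ _))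
  have hδ1 : δ < 1 := hδ'.trans_le (min_le_right _ _)
  exact ⟨k * n, (hn.pow (by linarith) (by linarith) k).mono hck hεk⟩
end
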